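/- Let g be an n×n grid diagram with rectangle r connecting generator x to generator y, let 𝕏 be the set of X-markings, 𝕆 = {O_1,…,O_n} the set of O-markings with weights m_i ∈ ℕ, and define the Alexander grading A(x) = J(x, 𝕏 − ∑_i m_i O_i). If each column and each row of r is counted with the appropriate multiplicity, then A(x) − A(y) = |𝕏 ∩ r| − ∑_{O_i ∈ 𝕆 ∩ r} m_i. -/
import Mathlib


open scoped Classical

noncomputable section

lemma ind_eq (p1 p2 u v : ℝ) (hu : u ≠ p1) (hv : v ≠ p2) :
    (if (u < p1 ∧ v < p2) ∨ (p1 < u ∧ p2 < v) then (1:ℝ) else 0) =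
    (1 + (if u < p1 then (1:ℝ) else -1) * (if v < p2 then (1:ℝ) else -1)) / 2 := by
  rcases hu.lt_or_gt with h | h <;> rcases hv.lt_or_gt with h' | h'
  · rw [if_pos (Or.inl ⟨h, h'⟩), if_pos h, if_pos h']; norm_num
  · rw [if_neg (by rintro (⟨_, h2⟩ | ⟨h2, _⟩) <;> linarith), if_pos h,
      if_neg (by linarith)]; norm_num
  · rw [if_neg (by rintro (⟨h2, _⟩ | ⟨_, h2⟩) <;> linarith), if_neg (by linarith),
      if_pos h']; norm_num
  · rw [if_pos (Or.inr ⟨h, h'⟩), if_neg (by linarith), if_neg (by linarith)]; norm_num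

lemma indic_key (a b c d p1 p2 : ℝ) (hab : a < b) (hcd : c < d)
    (h1 : a ≠ p1) (h2 : b ≠ p1) (h3 : c ≠ p2) (h4 : d ≠ p2) :
    ((if (a < p1 ∧ c < p2) ∨ (p1 < a ∧ p2 < c) then (1:ℝ) else 0)
      + (if (b < p1 ∧ d < p2) ∨ (p1 < b ∧ p2 < d) then (1:ℝ) else 0))
    - ((if (a < p1 ∧ d < p2) ∨ (p1 < a ∧ p2 < d) then (1:ℝ) else 0)
      + (if (b < p1 ∧ c < p2) ∨ (p1 < b ∧ p2 < c) then (1:ℝ) else 0))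
    = if a < p1 ∧ p1 < b ∧ c < p2 ∧ p2 < d then 2 else 0 := by
  rw [ind_eq p1 p2 a c h1 h3, ind_eq p1 p2 b d h2 h4,
      ind_eq p1 p2 a d h1 h4, ind_eq p1 p2 b c h2 h3]
  by_cases hR : a < p1 ∧ p1 < b ∧ c < p2 ∧ p2 < d
  · obtain ⟨r1, r2, r3, r4⟩ := hR
    rw [if_pos r1, if_pos r3, if_neg (asymm r2), if_neg (asymm r4),
      if_pos ⟨r1, r2, r3, r4⟩]
    norm_num
  · rw [if_neg hR]
    split_ifs with g1 g2 g3 g4 <;>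
      first
        | exact absurd ⟨by assumption,
            lt_of_le_of_ne (not_lt.mp (by assumption)) (Ne.symm h2),
            by assumption,
            lt_of_le_of_ne (not_lt.mp (by assumption)) (Ne.symm h4)⟩ hR
        | linarith
        | norm_num


/-- J(x, p): half the number of points of the generator x strictly comparable
with the point p (either below-left or above-right). -/
def gridJ {n : ℕ} (x : Fin n → ℝ × ℝ) (p : ℝ × ℝ) : ℝ :=
  (∑ i, if ((x i).1 < p.1 ∧ (x i).2 < p.2) ∨ (p.1 < (x i).1 ∧ p.2 < (x i).2)
    then (1 : ℝ) else 0) / 2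

/-- The Alexander grading A(x) = J(x, 𝕏 − ∑ᵢ mᵢ Oᵢ). -/
def alexA {n : ℕ} (x : Fin n → ℝ × ℝ) (X : Finset (ℝ × ℝ)) (O : Fin n → ℝ × ℝ)
    (m : Fin n → ℕ) : ℝ :=
  (∑ p ∈ X, gridJ x p) - ∑ i, (m i : ℝ) * gridJ x (O i)

/-- If r is a rectangle connecting the generator x to the
generator y (corners, clockwise from the bottom left: x_j, y_k, x_k, y_j),
𝕏 the X-markings, O_i the O-markings with weights m_i, all markings in general
position with respect to the gridlines through x and y, then
A(x) − A(y) = |𝕏 ∩ r| − ∑_{O_i ∈ r} m_i. -/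
theorem stmt6 {n : ℕ} (x y : Fin n → ℝ × ℝ) (j k : Fin n) (hjk : j ≠ k)
    (a b c d : ℝ) (hab : a < b) (hcd : c < d)
    (hxj : x j = (a, c)) (hxk : x k = (b, d))
    (hyj : y j = (a, d)) (hyk : y k = (b, c))
    (hagree : ∀ i, i ≠ j → i ≠ k → y i = x i)
    (X : Finset (ℝ × ℝ)) (O : Fin n → ℝ × ℝ) (m : Fin n → ℕ)
    (hgen : ∀ p : ℝ × ℝ, (p ∈ X ∨ ∃ i, p = O i) →
      ∀ i, (x i).1 ≠ p.1 ∧ (x i).2 ≠ p.2 ∧ (y i).1 ≠ p.1 ∧ (y i).2 ≠ p.2) :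
    alexA x X O m - alexA y X O m =
      ((X.filter fun p => a < p.1 ∧ p.1 < b ∧ c < p.2 ∧ p.2 < d).card : ℝ) -
      ∑ i ∈ Finset.univ.filter
          (fun i => a < (O i).1 ∧ (O i).1 < b ∧ c < (O i).2 ∧ (O i).2 < d),
        (m i : ℝ) := by
  have key : ∀ p : ℝ × ℝ, (∀ i, (x i).1 ≠ p.1 ∧ (x i).2 ≠ p.2 ∧
      (y i).1 ≠ p.1 ∧ (y i).2 ≠ p.2) →
      gridJ x p - gridJ y p =
        if a < p.1 ∧ p.1 < b ∧ c < p.2 ∧ p.2 < d then (1:ℝ) else 0 := by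
    intro p hp
    have h1 : a ≠ p.1 := by have := (hp j).1; rwa [hxj] at this
    have h2 : b ≠ p.1 := by have := (hp k).1; rwa [hxk] at this
    have h3 : c ≠ p.2 := by have := (hp j).2.1; rwa [hxj] at this
    have h4 : d ≠ p.2 := by have := (hp k).2.1; rwa [hxk] at this
    unfold gridJ
    rw [div_sub_div_same, ← Finset.sum_sub_distrib]
    rw [Finset.sum_eq_add_of_mem j k (Finset.mem_univ j) (Finset.mem_univ k) hjk
      (fun i _ hi => by rw [hagree i hi.1 hi.2, sub_self])]
    rw [hxj, hxk, hyj, hyk]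
    have := indic_key a b c d p.1 p.2 hab hcd h1 h2 h3 h4
    simp only at this ⊢
    split_ifs at this ⊢ <;> linarith
  unfold alexA
  have hX : ∀ p ∈ X, gridJ x p - gridJ y p =
      if a < p.1 ∧ p.1 < b ∧ c < p.2 ∧ p.2 < d then (1:ℝ) else 0 :=
    fun p hpX => key p (hgen p (Or.inl hpX))
  have hO : ∀ i, gridJ x (O i) - gridJ y (O i) =
      if a < (O i).1 ∧ (O i).1 < b ∧ c < (O i).2 ∧ (O i).2 < d then (1:ℝ) else 0 :=
    fun i => key (O i) (hgen (O i) (Or.inr ⟨i, rfl⟩))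
  have e1 : (∑ p ∈ X, gridJ x p) - (∑ p ∈ X, gridJ y p) =
      ((X.filter fun p => a < p.1 ∧ p.1 < b ∧ c < p.2 ∧ p.2 < d).card : ℝ) := by
    rw [← Finset.sum_sub_distrib, Finset.sum_congr rfl hX, Finset.sum_ite,
      Finset.sum_const, Finset.sum_const]
    simp
  have e2 : (∑ i, (m i : ℝ) * gridJ x (O i)) - (∑ i, (m i : ℝ) * gridJ y (O i)) =
      ∑ i ∈ Finset.univ.filter
          (fun i => a < (O i).1 ∧ (O i).1 < b ∧ c < (O i).2 ∧ (O i).2 < d),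
        (m i : ℝ) := by
    rw [← Finset.sum_sub_distrib]
    rw [Finset.sum_congr rfl (fun i _ => by rw [← mul_sub, hO i])]
    rw [Finset.sum_filter]
    exact Finset.sum_congr rfl fun i _ => by split_ifs <;> ring
  linarith

end
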